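/- arXiv:2409.18220 — 4 statements merged into one kernel-verified Lean document; each statement's English description precedes it below -/
import Mathlib

section
/- Let G be a finite simple graph and let H_1, …, H_k be pairwise vertex-disjoint induced subgraphs of G. Then the graph energy satisfies E(G) ≥ Σ_{i=1}^k E(H_i). -/
open Matrix

variable {V : Type*}

/-- The real adjacency matrix of a simple graph is Hermitian. -/
lemma adjMatrix_isHermitian [Fintype V] [DecidableEq V] (G : SimpleGraph V)
    [DecidableRel G.Adj] : (G.adjMatrix ℝ).IsHermitian := by
  rw [Matrix.IsHermitian, Matrix.conjTranspose_eq_transpose_of_trivial]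
  exact G.isSymm_adjMatrix

/-- The eigenvalues of the adjacency matrix of `G`, as a function indexed by the vertices. -/
noncomputable def adjEigenvalues [Fintype V] [DecidableEq V] (G : SimpleGraph V) : V → ℝ :=
  letI := Classical.decRel G.Adj
  (adjMatrix_isHermitian G).eigenvalues

/-- The energy of a graph: the sum of the absolute values of its eigenvalues. -/
noncomputable def graphEnergy [Fintype V] [DecidableEq V] (G : SimpleGraph V) : ℝ :=
  ∑ i, |adjEigenvalues G i|

/-- The positive square energy `s⁺(G)`: the sum of squares of the positive eigenvalues. -/
noncomputable def sPlus [Fintype V] [DecidableEq V] (G : SimpleGraph V) : ℝ :=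
  ∑ i, if 0 < adjEigenvalues G i then (adjEigenvalues G i) ^ 2 else 0

/-- The negative square energy `s⁻(G)`: the sum of squares of the negative eigenvalues. -/
noncomputable def sMinus [Fintype V] [DecidableEq V] (G : SimpleGraph V) : ℝ :=
  ∑ i, if adjEigenvalues G i < 0 then (adjEigenvalues G i) ^ 2 else 0

/-- The largest adjacency eigenvalue `λ₁(G)` (for a graph with a nonempty vertex set). -/
noncomputable def maxEig [Fintype V] [DecidableEq V] (G : SimpleGraph V) : ℝ :=
  ⨆ i, adjEigenvalues G i

/-- The smallest adjacency eigenvalue `λₙ(G)` (for a graph with a nonempty vertex set). -/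
noncomputable def minEig [Fintype V] [DecidableEq V] (G : SimpleGraph V) : ℝ :=
  ⨅ i, adjEigenvalues G i

/-! The energy of a real symmetric matrix `A` is its trace norm: `E(A) = tr (A · sign A)`, and
`tr (A B) ≤ E(A)` for every `B` with `|xᵀ B x| ≤ xᵀ x` for all `x` (diagonalise `A`; each diagonal
entry of `B` in an orthonormal eigenbasis has absolute value at most `1`). For the adjacency matrix
`A` of `G`, take `B` block diagonal with the blocks `sign A(Hᵢ)` on the vertex sets of the `Hᵢ` and
zero elsewhere. Since the vertex sets are disjoint, `B` satisfies the bound, and since each `Hᵢ` is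
induced, `A(Hᵢ)` is the corresponding diagonal block of `A`, so
`tr (A B) = ∑ᵢ tr (A(Hᵢ) · sign A(Hᵢ)) = ∑ᵢ E(Hᵢ)`. -/

theorem abs_sign_le_one {α : Type*} [Ring α] [LinearOrder α] [IsStrictOrderedRing α] (x : α) :
    |(SignType.sign x : α)| ≤ 1 := by
  rcases lt_trichotomy x 0 with h | rfl | h <;> simp [*]

namespace Matrix.IsHermitian
variable {n : Type*} [Fintype n] [DecidableEq n]

theorem trace_mul_eq_sum_eigenvalues_mul {𝕜 : Type*} [RCLike 𝕜] {A : Matrix n n 𝕜}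
    (hA : A.IsHermitian) (B : Matrix n n 𝕜) :
    trace (A * B) = ∑ i, (hA.eigenvalues i : 𝕜) *
      (star (hA.eigenvectorUnitary : Matrix n n 𝕜) * B * hA.eigenvectorUnitary) i i := by
  set U : Matrix n n 𝕜 := (hA.eigenvectorUnitary : Matrix n n 𝕜)
  have hspec : A = U * diagonal (RCLike.ofReal ∘ hA.eigenvalues) * star U := hA.spectral_theorem
  calc trace (A * B) = trace (U * diagonal (RCLike.ofReal ∘ hA.eigenvalues) * star U * B) := by
        rw [← hspec]
    _ = trace (diagonal (RCLike.ofReal ∘ hA.eigenvalues) * (star U * B * U)) := by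
        rw [Matrix.mul_assoc, trace_mul_comm, ← Matrix.mul_assoc, trace_mul_comm]
    _ = _ := by simp [trace, diagonal_mul]

variable {A : Matrix n n ℝ} (hA : A.IsHermitian)

theorem trace_mul_cfc (f : ℝ → ℝ) :
    trace (A * hA.cfc f) = ∑ i, hA.eigenvalues i * f (hA.eigenvalues i) := by
  set U : Matrix n n ℝ := (hA.eigenvectorUnitary : Matrix n n ℝ)
  have hU : star U * U = 1 := Unitary.coe_star_mul_self _
  have hconj : star U * hA.cfc f * U = diagonal (f ∘ hA.eigenvalues) := by
    rw [IsHermitian.cfc, Unitary.conjStarAlgAut_apply, ← Matrix.mul_assoc, ← Matrix.mul_assoc, hU,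
      Matrix.one_mul, Matrix.mul_assoc, hU, Matrix.mul_one]
    rfl
  rw [hA.trace_mul_eq_sum_eigenvalues_mul, hconj]
  simp

theorem trace_mul_le_sum_abs_eigenvalues {B : Matrix n n ℝ}
    (hB : ∀ x, |x ⬝ᵥ B *ᵥ x| ≤ x ⬝ᵥ x) : trace (A * B) ≤ ∑ i, |hA.eigenvalues i| := by
  set U : Matrix n n ℝ := (hA.eigenvectorUnitary : Matrix n n ℝ)
  have hUU : star U * U = 1 := Unitary.coe_star_mul_self _
  have hstar : star U = Uᵀ := by rw [star_eq_conjTranspose, conjTranspose_eq_transpose_of_trivial]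
  rw [hA.trace_mul_eq_sum_eigenvalues_mul]
  refine Finset.sum_le_sum fun i _ => ?_
  have hcol : |(star U * B * U) i i| ≤ 1 := by
    have hunit : Uᵀ i ⬝ᵥ Uᵀ i = 1 := by
      have h1 : (star U * U) i i = 1 := by simp [hUU]
      rwa [mul_apply', hstar] at h1
    rw [mul_mul_apply, hstar]
    exact hunit ▸ hB _
  calc hA.eigenvalues i * (star U * B * U) i i
      ≤ |hA.eigenvalues i| * |(star U * B * U) i i| := by rw [← abs_mul]; exact le_abs_self _
    _ ≤ |hA.eigenvalues i| := mul_le_of_le_one_right (abs_nonneg _) hcol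

theorem abs_dotProduct_cfc_mulVec_le {f : ℝ → ℝ} (hf : ∀ i, |f (hA.eigenvalues i)| ≤ 1)
    (x : n → ℝ) : |x ⬝ᵥ hA.cfc f *ᵥ x| ≤ x ⬝ᵥ x := by
  set U : Matrix n n ℝ := (hA.eigenvectorUnitary : Matrix n n ℝ)
  have hUU : U * star U = 1 := Unitary.coe_mul_star_self _
  have hstar : star U = Uᵀ := by rw [star_eq_conjTranspose, conjTranspose_eq_transpose_of_trivial]
  set y := star U *ᵥ x
  have hxU : x ᵥ* U = y := by rw [← mulVec_transpose, ← hstar]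
  have hquad : x ⬝ᵥ hA.cfc f *ᵥ x = ∑ j, f (hA.eigenvalues j) * y j ^ 2 := by
    rw [IsHermitian.cfc, Unitary.conjStarAlgAut_apply, ← mulVec_mulVec, ← mulVec_mulVec,
      dotProduct_mulVec, hxU]
    simp only [dotProduct, mulVec_diagonal, Function.comp_apply, RCLike.ofReal_real_eq_id, id]
    exact Finset.sum_congr rfl fun j _ => by ring
  have hnorm : ∑ j, y j ^ 2 = x ⬝ᵥ x := by
    calc ∑ j, y j ^ 2 = (x ᵥ* U) ⬝ᵥ y := by simp [hxU, dotProduct, sq]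
      _ = x ⬝ᵥ x := by rw [← dotProduct_mulVec, mulVec_mulVec, hUU, one_mulVec]
  calc |x ⬝ᵥ hA.cfc f *ᵥ x| ≤ ∑ j, |f (hA.eigenvalues j) * y j ^ 2| := by
        rw [hquad]; exact Finset.abs_sum_le_sum_abs _ _
    _ ≤ ∑ j, y j ^ 2 := Finset.sum_le_sum fun j _ => by
        rw [abs_mul, abs_of_nonneg (sq_nonneg (y j))]
        exact mul_le_of_le_one_left (sq_nonneg _) (hf j)
    _ = x ⬝ᵥ x := hnorm

end Matrix.IsHermitian

namespace Matrix

variable {α ι : Type*} [CommSemiring α] [Fintype ι] [Fintype V] [DecidableEq V]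

/-- For injective `e`, the matrix that is `N` on the image of `e` and zero elsewhere. It is the
adjoint of `A ↦ A.submatrix e e` for the trace pairing. -/
def extendByZero (e : ι → V) (N : Matrix ι ι α) : Matrix V V α :=
  (1 : Matrix V V α).submatrix id e * N * (1 : Matrix V V α).submatrix e id

theorem trace_mul_extendByZero (A : Matrix V V α) (e : ι → V) (N : Matrix ι ι α) :
    trace (A * N.extendByZero e) = trace (A.submatrix e e * N) := by
  have hrows : (1 : Matrix V V α).submatrix e id * A = A.submatrix e id := by
    simpa using one_submatrix_mul e (Equiv.refl V) A
  have hcols : A.submatrix e id * (1 : Matrix V V α).submatrix id e = A.submatrix e e := by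
    simpa using mul_submatrix_one (Equiv.refl V) e (A.submatrix e id)
  rw [extendByZero, ← Matrix.mul_assoc, ← Matrix.mul_assoc, trace_mul_cycle,
    ← Matrix.mul_assoc, hrows, hcols]

theorem dotProduct_extendByZero_mulVec (x : V → α) (e : ι → V) (N : Matrix ι ι α) :
    x ⬝ᵥ N.extendByZero e *ᵥ x = (x ∘ e) ⬝ᵥ N *ᵥ (x ∘ e) := by
  have hleft : x ᵥ* (1 : Matrix V V α).submatrix id e = x ∘ e := by
    simpa using submatrix_vecMul_equiv (1 : Matrix V V α) x (Equiv.refl V) e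
  have hright : (1 : Matrix V V α).submatrix e id *ᵥ x = x ∘ e := by
    simpa using submatrix_mulVec_equiv (1 : Matrix V V α) x e (Equiv.refl V)
  rw [extendByZero, ← mulVec_mulVec, ← mulVec_mulVec, dotProduct_mulVec, hleft, hright]

open Function in
theorem abs_dotProduct_sum_extendByZero_mulVec_le {κ : Type*} [Fintype κ] {s : κ → Finset V}
    (hs : Pairwise (Disjoint on s)) (N : ∀ i, Matrix (s i) (s i) ℝ)
    (hN : ∀ i y, |y ⬝ᵥ N i *ᵥ y| ≤ y ⬝ᵥ y) (x : V → ℝ) :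
    |x ⬝ᵥ (∑ i, (N i).extendByZero (↑)) *ᵥ x| ≤ x ⬝ᵥ x := by
  calc |x ⬝ᵥ (∑ i, (N i).extendByZero (↑)) *ᵥ x|
      ≤ ∑ i, |(x ∘ (↑)) ⬝ᵥ N i *ᵥ (x ∘ (↑))| := by
        simp only [sum_mulVec, dotProduct_sum, dotProduct_extendByZero_mulVec]
        exact Finset.abs_sum_le_sum_abs _ _
    _ ≤ ∑ i, ∑ v ∈ s i, x v * x v := Finset.sum_le_sum fun i _ =>
        (hN i _).trans_eq (Finset.sum_coe_sort (s i) fun v => x v * x v)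
    _ = ∑ v ∈ Finset.univ.biUnion s, x v * x v :=
        (Finset.sum_biUnion fun i _ j _ hij => hs hij).symm
    _ ≤ x ⬝ᵥ x := Finset.sum_le_univ_sum_of_nonneg fun v => mul_self_nonneg (x v)

end Matrix

theorem SimpleGraph.adjMatrix_induce {α : Type*} [Zero α] [One α] (G : SimpleGraph V)
    [DecidableRel G.Adj] (s : Set V) :
    (G.induce s).adjMatrix α = (G.adjMatrix α).submatrix (↑) (↑) := by
  ext a b
  simp [SimpleGraph.adjMatrix_apply]

section Energy

variable [Fintype V] [DecidableEq V] (G : SimpleGraph V) [DecidableRel G.Adj]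

theorem graphEnergy_eq_sum_abs_eigenvalues :
    graphEnergy G = ∑ v, |(adjMatrix_isHermitian G).eigenvalues v| := by
  unfold graphEnergy adjEigenvalues
  congr!

theorem graphEnergy_eq_trace_mul_cfc_sign :
    graphEnergy G = trace (G.adjMatrix ℝ *
      (adjMatrix_isHermitian G).cfc fun x => (SignType.sign x : ℝ)) := by
  simp [graphEnergy_eq_sum_abs_eigenvalues, IsHermitian.trace_mul_cfc, self_mul_sign]

end Energy

/-- If `H₁, …, H_k` are pairwise vertex-disjoint induced subgraphs of `G`,
then `E(G) ≥ ∑ᵢ E(Hᵢ)`. -/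
theorem energy_ge_sum_energy_induced {V : Type*} [Fintype V] [DecidableEq V]
    (G : SimpleGraph V) (k : ℕ) (f : Fin k → Finset V)
    (hdisj : ∀ i j : Fin k, i ≠ j → Disjoint (f i) (f j)) :
    graphEnergy G ≥ ∑ i : Fin k, graphEnergy (G.induce (↑(f i) : Set V)) := by
  classical
  let S i := (adjMatrix_isHermitian (G.induce (f i : Set V))).cfc fun x => (SignType.sign x : ℝ)
  have hS : ∀ i y, |y ⬝ᵥ S i *ᵥ y| ≤ y ⬝ᵥ y := fun i =>
    IsHermitian.abs_dotProduct_cfc_mulVec_le _ fun _ => abs_sign_le_one _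
  calc ∑ i, graphEnergy (G.induce (f i : Set V))
      = ∑ i, trace ((G.adjMatrix ℝ).submatrix (↑) (↑) * S i) := by
        simp only [graphEnergy_eq_trace_mul_cfc_sign, SimpleGraph.adjMatrix_induce, S]
    _ = trace (G.adjMatrix ℝ * ∑ i, (S i).extendByZero (↑)) := by
        simp only [Matrix.mul_sum, trace_sum, trace_mul_extendByZero]
    _ ≤ ∑ v, |(adjMatrix_isHermitian G).eigenvalues v| :=
        (adjMatrix_isHermitian G).trace_mul_le_sum_abs_eigenvalues
          (abs_dotProduct_sum_extendByZero_mulVec_le (fun i j => hdisj i j) S hS)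
    _ = graphEnergy G := (graphEnergy_eq_sum_abs_eigenvalues G).symm
end

section
/- Let G be a finite simple graph and let H_1, …, H_k be pairwise vertex-disjoint induced subgraphs of G. Then s^-(G) ≥ Σ_{i=1}^k s^-(H_i). -/
/-!
For a real symmetric matrix `A`, the sum of the squares of its negative eigenvalues is the squared
Frobenius distance from `A` to the cone of positive semidefinite matrices; the minimum is attained
at `C = A⁺`, the positive part of `A`. Compressing this optimal `C` to the principal block indexed
by `Hᵢ` gives a positive semidefinite competitor for `A(Hᵢ)`, so `s⁻(Hᵢ) ≤ ‖(A - C)|_{Hᵢ}‖²`, and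
since the blocks are disjoint these masses add up to at most `‖A - C‖² = s⁻(G)`.
-/

open Matrix

variable {V : Type*}

namespace Matrix

open Function

section FrobeniusSq

variable {m n : Type*}

def frobeniusSq [Fintype m] [Fintype n] (M : Matrix m n ℝ) : ℝ := ∑ i, ∑ j, M i j ^ 2

lemma frobeniusSq_eq_trace [Fintype m] [Fintype n] (M : Matrix m n ℝ) :
    frobeniusSq M = trace (Mᴴ * M) := by
  simp only [frobeniusSq, trace, diag, mul_apply, conjTranspose_apply, star_trivial, sq]
  exact Finset.sum_comm

lemma frobeniusSq_submatrix (M : Matrix m n ℝ) (s : Finset m) (t : Finset n) :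
    frobeniusSq (M.submatrix ((↑) : ↥(s : Set m) → m) ((↑) : ↥(t : Set n) → n))
      = ∑ i ∈ s, ∑ j ∈ t, M i j ^ 2 := by
  simp only [frobeniusSq, submatrix_apply]
  rw [← Finset.sum_coe_sort s]
  exact Finset.sum_congr rfl fun i _ => Finset.sum_coe_sort t (fun j => M i j ^ 2)

variable [Fintype n]

lemma sum_sq_diag_le_frobeniusSq (M : Matrix n n ℝ) : ∑ i, M i i ^ 2 ≤ frobeniusSq M :=
  Finset.sum_le_sum fun i _ =>
    Finset.single_le_sum (fun j _ => sq_nonneg (M i j)) (Finset.mem_univ i)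

lemma sum_frobeniusSq_submatrix_le {ι : Type*} [Fintype ι] (M : Matrix n n ℝ)
    (s : ι → Finset n) (hs : Pairwise (Disjoint on s)) :
    ∑ i, frobeniusSq (M.submatrix ((↑) : ↥(s i : Set n) → n) ((↑) : ↥(s i : Set n) → n))
      ≤ frobeniusSq M := by
  have hblocks : ((Finset.univ : Finset ι) : Set ι).PairwiseDisjoint fun i => s i ×ˢ s i :=
    fun i _ j _ hij => Finset.disjoint_product.mpr (Or.inl (hs hij))
  calc _ = ∑ p ∈ Finset.univ.disjiUnion (fun i => s i ×ˢ s i) hblocks, M p.1 p.2 ^ 2 := by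
        simp only [Finset.sum_disjiUnion, Finset.sum_product, frobeniusSq_submatrix]
    _ ≤ ∑ p : n × n, M p.1 p.2 ^ 2 := Finset.sum_le_univ_sum_of_nonneg fun p => sq_nonneg _
    _ = frobeniusSq M := Fintype.sum_prod_type _

variable [DecidableEq n]

lemma frobeniusSq_diagonal (d : n → ℝ) : frobeniusSq (diagonal d) = ∑ i, d i ^ 2 := by
  refine Finset.sum_congr rfl fun i _ => ?_
  simp [diagonal_apply, apply_ite (· ^ 2)]

lemma frobeniusSq_conjStarAlgAut (u : unitary (Matrix n n ℝ)) (M : Matrix n n ℝ) :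
    frobeniusSq (Unitary.conjStarAlgAut ℝ _ u M) = frobeniusSq M := by
  rw [frobeniusSq_eq_trace, frobeniusSq_eq_trace, ← star_eq_conjTranspose,
    ← star_eq_conjTranspose, ← map_star, ← map_mul, Unitary.conjStarAlgAut_apply,
    trace_mul_cycle, Unitary.coe_star_mul_self, one_mul]

end FrobeniusSq

lemma PosSemidef.conjStarAlgAut {n : Type*} [Fintype n] [DecidableEq n] {C : Matrix n n ℝ}
    (hC : C.PosSemidef) (u : unitary (Matrix n n ℝ)) :
    (Unitary.conjStarAlgAut ℝ _ u C).PosSemidef := by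
  simpa [Unitary.conjStarAlgAut_apply, star_eq_conjTranspose] using
    hC.mul_mul_conjTranspose_same (u : Matrix n n ℝ)

namespace IsHermitian

variable {n : Type*} [Fintype n] [DecidableEq n] {A : Matrix n n ℝ}

noncomputable def negSquareEnergy (hA : A.IsHermitian) : ℝ :=
  ∑ i, if hA.eigenvalues i < 0 then hA.eigenvalues i ^ 2 else 0

lemma negSquareEnergy_congr {B : Matrix n n ℝ} (hA : A.IsHermitian) (hB : B.IsHermitian)
    (h : A = B) : hA.negSquareEnergy = hB.negSquareEnergy := by
  subst h; rfl

lemma conjStarAlgAut_star_eigenvectorUnitary_real (hA : A.IsHermitian) :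
    Unitary.conjStarAlgAut ℝ _ (star hA.eigenvectorUnitary) A = diagonal hA.eigenvalues := by
  simpa using hA.conjStarAlgAut_star_eigenvectorUnitary

lemma negSquareEnergy_le_frobeniusSq_sub (hA : A.IsHermitian) {C : Matrix n n ℝ}
    (hC : C.PosSemidef) : hA.negSquareEnergy ≤ frobeniusSq (A - C) := by
  set Φ := Unitary.conjStarAlgAut ℝ _ (star hA.eigenvectorUnitary)
  have hΦC : (Φ C).PosSemidef := hC.conjStarAlgAut _
  rw [← frobeniusSq_conjStarAlgAut (star hA.eigenvectorUnitary), map_sub,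
    hA.conjStarAlgAut_star_eigenvectorUnitary_real]
  -- in the eigenbasis the diagonal of `A - C` is `λᵢ - cᵢᵢ` with `cᵢᵢ ≥ 0`
  refine le_trans (Finset.sum_le_sum fun i _ => ?_) (sum_sq_diag_le_frobeniusSq _)
  have hc : 0 ≤ Φ C i i := hΦC.diag_nonneg
  split_ifs with hneg
  · simp only [sub_apply, diagonal_apply_eq]; nlinarith
  · positivity

lemma exists_posSemidef_frobeniusSq_sub_eq (hA : A.IsHermitian) :
    ∃ C : Matrix n n ℝ, C.PosSemidef ∧ frobeniusSq (A - C) = hA.negSquareEnergy := by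
  set Φ := Unitary.conjStarAlgAut ℝ _ (star hA.eigenvectorUnitary)
  refine ⟨Φ.symm (diagonal fun i => max (hA.eigenvalues i) 0), ?_, ?_⟩
  · rw [Unitary.conjStarAlgAut_symm]
    exact (PosSemidef.diagonal fun i => le_max_right _ _).conjStarAlgAut _
  · rw [← frobeniusSq_conjStarAlgAut (star hA.eigenvectorUnitary), map_sub,
      hA.conjStarAlgAut_star_eigenvectorUnitary_real, StarAlgEquiv.apply_symm_apply,
      diagonal_sub, frobeniusSq_diagonal]
    refine Finset.sum_congr rfl fun i _ => ?_
    split_ifs with hneg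
    · rw [max_eq_right hneg.le, sub_zero]
    · rw [max_eq_left (not_lt.mp hneg), sub_self, sq, zero_mul]

lemma sum_negSquareEnergy_submatrix_le {ι : Type*} [Fintype ι] (hA : A.IsHermitian)
    (s : ι → Finset n) (hs : Pairwise (Disjoint on s)) :
    ∑ i, (hA.submatrix ((↑) : ↥(s i : Set n) → n)).negSquareEnergy ≤ hA.negSquareEnergy := by
  obtain ⟨C, hC, hAC⟩ := hA.exists_posSemidef_frobeniusSq_sub_eq
  have hblock (i : ι) : (hA.submatrix ((↑) : ↥(s i : Set n) → n)).negSquareEnergy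
      ≤ frobeniusSq
        ((A - C).submatrix ((↑) : ↥(s i : Set n) → n) ((↑) : ↥(s i : Set n) → n)) :=
    (hA.submatrix _).negSquareEnergy_le_frobeniusSq_sub (hC.submatrix _)
  calc _ ≤ _ := Finset.sum_le_sum fun i _ => hblock i
    _ ≤ frobeniusSq (A - C) := sum_frobeniusSq_submatrix_le _ s hs
    _ = hA.negSquareEnergy := hAC

end IsHermitian

end Matrix

lemma sMinus_eq_negSquareEnergy [Fintype V] [DecidableEq V] (G : SimpleGraph V)
    [DecidableRel G.Adj] :
    sMinus G = Matrix.IsHermitian.negSquareEnergy (adjMatrix_isHermitian G) := by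
  unfold sMinus adjEigenvalues Matrix.IsHermitian.negSquareEnergy
  congr!

lemma sMinus_induce [Fintype V] [DecidableEq V] (G : SimpleGraph V) [DecidableRel G.Adj]
    (s : Finset V) :
    sMinus (G.induce (s : Set V))
      = ((adjMatrix_isHermitian G).submatrix ((↑) : ↥(s : Set V) → V)).negSquareEnergy := by
  rw [sMinus_eq_negSquareEnergy]
  exact Matrix.IsHermitian.negSquareEnergy_congr _ _
    ((SimpleGraph.Embedding.induce (s : Set V)).submatrix_adjMatrix ℝ).symm

/-- If `H₁, …, H_k` are pairwise vertex-disjoint induced subgraphs of `G`,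
then `s⁻(G) ≥ ∑ᵢ s⁻(Hᵢ)`. -/
theorem sMinus_ge_sum_sMinus_induced {V : Type*} [Fintype V] [DecidableEq V]
    (G : SimpleGraph V) (k : ℕ) (f : Fin k → Finset V)
    (hdisj : ∀ i j : Fin k, i ≠ j → Disjoint (f i) (f j)) :
    sMinus G ≥ ∑ i : Fin k, sMinus (G.induce (↑(f i) : Set V)) := by
  classical
  simp only [sMinus_induce, sMinus_eq_negSquareEnergy G]
  exact Matrix.IsHermitian.sum_negSquareEnergy_submatrix_le (adjMatrix_isHermitian G) f hdisj
end

section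
/- Let G be a finite simple graph and let H be an induced subgraph of G. Then s^+(G) ≥ s^+(H). -/
open Matrix

variable {V : Type*}

/-!
With `A⁺` the positive part of a symmetric matrix `A`, `s⁺(A) = tr (A⁺ A⁺)`. If `B ≤ Q` in the
Loewner order, then `tr (B⁺ B⁺) = tr (B⁺ B) ≤ tr (B⁺ Q) ≤ (tr (B⁺ B⁺) + tr (Q Q)) / 2`, so
`tr (B⁺ B⁺) ≤ tr (Q Q)`. Take for `B` and `Q` the principal submatrices of `A` and `A⁺` on the
vertices of `H`: `B ≤ Q` because `A ≤ A⁺`, and `tr (Q Q)`, a partial sum of the squared entries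
of `A⁺`, is at most `tr (A⁺ A⁺) = s⁺(G)`.
-/

namespace Matrix

open scoped MatrixOrder ComplexOrder

variable {n m 𝕜 : Type*} [Fintype n] [RCLike 𝕜]

lemma two_mul_trace_mul_le {X Y : Matrix n n ℝ} (hX : X.IsHermitian) (hY : Y.IsHermitian) :
    2 * (X * Y).trace ≤ (X * X).trace + (Y * Y).trace := by
  have hsq : 0 ≤ ((X - Y)ᴴ * (X - Y)).trace := (posSemidef_conjTranspose_mul_self _).trace_nonneg
  rw [conjTranspose_sub, hX.eq, hY.eq, sub_mul, mul_sub, mul_sub, trace_sub, trace_sub,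
    trace_sub, trace_mul_comm Y X] at hsq
  linarith

lemma IsHermitian.trace_mul_self_eq_sum_sq {A : Matrix n n ℝ} (hA : A.IsHermitian) :
    (A * A).trace = ∑ i, ∑ j, A i j ^ 2 := by
  refine Finset.sum_congr rfl fun i _ => Finset.sum_congr rfl fun j _ => ?_
  have hsymm : A j i = A i j := by simpa using hA.apply i j
  show A i j * A j i = A i j ^ 2
  rw [hsymm, sq]

lemma IsHermitian.trace_submatrix_mul_self_le {A : Matrix n n ℝ} (hA : A.IsHermitian) [Fintype m]
    {e : m → n} (he : Function.Injective e) :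
    (A.submatrix e e * A.submatrix e e).trace ≤ (A * A).trace := by
  have sum_comp_le (f : n → ℝ) (hf : ∀ i, 0 ≤ f i) : ∑ a, f (e a) ≤ ∑ i, f i :=
    (Finset.sum_map Finset.univ ⟨e, he⟩ f).symm.trans_le (Finset.sum_le_univ_sum_of_nonneg hf)
  rw [(hA.submatrix e).trace_mul_self_eq_sum_sq, hA.trace_mul_self_eq_sum_sq]
  calc ∑ a, ∑ b, A (e a) (e b) ^ 2 ≤ ∑ a, ∑ j, A (e a) j ^ 2 :=
        Finset.sum_le_sum fun a _ => sum_comp_le _ fun j => sq_nonneg _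
    _ ≤ ∑ i, ∑ j, A i j ^ 2 :=
        sum_comp_le _ fun i => Finset.sum_nonneg fun j _ => sq_nonneg _

variable [DecidableEq n]

lemma trace_mul_nonneg {A B : Matrix n n 𝕜} (hA : 0 ≤ A) (hB : 0 ≤ B) : 0 ≤ (A * B).trace := by
  obtain ⟨C, rfl⟩ := CStarAlgebra.nonneg_iff_eq_star_mul_self.mp hB
  rw [← Matrix.mul_assoc, trace_mul_comm, ← Matrix.mul_assoc]
  exact (hA.posSemidef.mul_mul_conjTranspose_same C).trace_nonneg

lemma IsHermitian.trace_cfc {A : Matrix n n 𝕜} (hA : A.IsHermitian) (f : ℝ → ℝ) :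
    (cfc f A).trace = ∑ i, (f (hA.eigenvalues i) : 𝕜) := by
  rw [hA.cfc_eq, IsHermitian.cfc, Unitary.conjStarAlgAut_apply, trace_mul_cycle,
    Unitary.coe_star_mul_self, one_mul, trace_diagonal]
  rfl

lemma IsHermitian.trace_posPart_mul_self {A : Matrix n n ℝ} (hA : A.IsHermitian) :
    (A⁺ * A⁺).trace = ∑ i, if 0 < hA.eigenvalues i then hA.eigenvalues i ^ 2 else 0 := by
  rw [CFC.posPart_def, cfcₙ_eq_cfc, ← cfc_mul .., hA.trace_cfc]
  refine Finset.sum_congr rfl fun i _ => ?_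
  split_ifs with h
  · simp [posPart_eq_self.mpr h.le, sq]
  · simp [posPart_eq_zero.mpr (not_lt.mp h)]

lemma IsHermitian.trace_posPart_mul_self_le_of_le {B Q : Matrix n n ℝ} (hB : B.IsHermitian)
    (hBQ : B ≤ Q) : (B⁺ * B⁺).trace ≤ (Q * Q).trace := by
  have hQ : Q.IsHermitian := by simpa using hB.add (le_iff.mp hBQ).isHermitian
  have hpos : 0 ≤ B⁺ := CFC.posPart_nonneg B
  have hBB : B⁺ * B = B⁺ * B⁺ :=
    calc B⁺ * B = B⁺ * (B⁺ - B⁻) := by rw [CFC.posPart_sub_negPart B hB]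
      _ = B⁺ * B⁺ := by rw [mul_sub, CFC.posPart_mul_negPart, sub_zero]
  have h1 : 0 ≤ (B⁺ * (Q - B)).trace := trace_mul_nonneg hpos (sub_nonneg.mpr hBQ)
  have h2 := two_mul_trace_mul_le hpos.posSemidef.isHermitian hQ
  rw [mul_sub, trace_sub, hBB] at h1
  linarith

lemma IsHermitian.trace_posPart_submatrix_mul_self_le {A : Matrix n n ℝ} (hA : A.IsHermitian)
    [Fintype m] [DecidableEq m] {e : m → n} (he : Function.Injective e) :
    ((A.submatrix e e)⁺ * (A.submatrix e e)⁺).trace ≤ (A⁺ * A⁺).trace := by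
  have hle : A.submatrix e e ≤ A⁺.submatrix e e :=
    (sub_nonneg.mpr (CFC.le_posPart hA)).posSemidef.submatrix e
  calc _ ≤ (A⁺.submatrix e e * A⁺.submatrix e e).trace :=
        (hA.submatrix e).trace_posPart_mul_self_le_of_le hle
    _ ≤ (A⁺ * A⁺).trace :=
        (CFC.posPart_nonneg A).posSemidef.isHermitian.trace_submatrix_mul_self_le he

end Matrix

/-- For an induced subgraph `H` of `G`, `s⁺(G) ≥ s⁺(H)`. -/
theorem sPlus_ge_sPlus_induced {V : Type*} [Fintype V] [DecidableEq V]
    (G : SimpleGraph V) (s : Finset V) :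
    sPlus G ≥ sPlus (G.induce (↑s : Set V)) := by
  -- the decidability instances that `adjEigenvalues` uses
  let := Classical.decRel G.Adj
  let := Classical.decRel (G.induce (↑s : Set V)).Adj
  have hsub : (G.induce (↑s : Set V)).adjMatrix ℝ = (G.adjMatrix ℝ).submatrix (↑) (↑) :=
    ((SimpleGraph.Embedding.induce _).submatrix_adjMatrix ℝ).symm
  rw [ge_iff_le, sPlus, sPlus, adjEigenvalues, adjEigenvalues,
    ← IsHermitian.trace_posPart_mul_self, ← IsHermitian.trace_posPart_mul_self, hsub]
  exact (adjMatrix_isHermitian G).trace_posPart_submatrix_mul_self_le Subtype.val_injective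
end

section
/- Let G be a finite simple graph on n ≥ 2 vertices with eigenvalues λ_1(G) ≥ … ≥ λ_n(G), let v be a vertex of G, and let G−v be the induced subgraph obtained by deleting v, with eigenvalues λ_1(G−v) ≥ … ≥ λ_{n−1}(G−v). Then s^-(G) ≥ λ_n(G)² + s^-(G−v) − λ_{n−1}(G−v)². -/
open Matrix

variable {V : Type*}

/-!
By Cauchy interlacing, the eigenvalues `μ₁ ≥ ⋯ ≥ μₙ` of `G` and `ν₁ ≥ ⋯ ≥ ν_{n-1}` of `G - v`
satisfy `μ_{k+1} ≤ ν_k`. With `f t = (min t 0)²`, both `f` and `t ↦ f t - t² = -(max t 0)²` are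
antitone, so dropping `f μ₁ ≥ 0` and comparing termwise,
`s⁻(G) - μₙ² ≥ ∑_{k=1}^{n-2} f μ_{k+1} + (f μₙ - μₙ²) ≥ ∑_{k=1}^{n-2} f ν_k + (f ν_{n-1} - ν_{n-1}²)`,
and the right-hand side is `s⁻(G - v) - ν_{n-1}²`.

Interlacing is the Courant–Fischer dimension count. Let `S` be the compression of `T` to an
`m`-dimensional subspace of an `n`-dimensional space, with eigenvalues indexed from `0` in
decreasing order, and `i = j + n - m`. Asking a vector to be orthogonal to the first `j`
eigenvectors of `S` and its image to be orthogonal to the eigenvectors of `T` after the `i`-th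
imposes `m - 1` conditions, so some nonzero vector satisfies them; its Rayleigh quotient is at
least `λᵢ(T)` and at most `λⱼ(S)`.
-/

open Module Finset
open scoped RealInnerProductSpace

namespace LinearMap.IsSymmetric

variable {E : Type*} [NormedAddCommGroup E] [InnerProductSpace ℝ E] [FiniteDimensional ℝ E]
  {T : E →ₗ[ℝ] E} (hT : T.IsSymmetric) {n : ℕ} (hn : finrank ℝ E = n)

include hT in
theorem inner_map_self_eq_sum_eigenvalues_mul_sq (x : E) :
    ⟪x, T x⟫ = ∑ i, hT.eigenvalues hn i * ⟪hT.eigenvectorBasis hn i, x⟫ ^ 2 := by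
  rw [← (hT.eigenvectorBasis hn).sum_inner_mul_inner x (T x)]
  refine Fintype.sum_congr _ _ fun i => ?_
  rw [← hT, apply_eigenvectorBasis, RCLike.ofReal_real_eq_id, id_eq, real_inner_smul_left,
    real_inner_comm x]
  ring

theorem inner_map_self_le_of_inner_eigenvectorBasis_eq_zero {x : E} {j : Fin n}
    (hx : ∀ i < j, ⟪hT.eigenvectorBasis hn i, x⟫ = 0) :
    ⟪x, T x⟫ ≤ hT.eigenvalues hn j * ‖x‖ ^ 2 := by
  rw [hT.inner_map_self_eq_sum_eigenvalues_mul_sq hn,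
    ← (hT.eigenvectorBasis hn).sum_sq_inner_right, mul_sum]
  refine sum_le_sum fun i _ => ?_
  rcases lt_or_ge i j with hij | hji
  · simp [hx i hij]
  · exact mul_le_mul_of_nonneg_right (hT.eigenvalues_antitone hn hji) (sq_nonneg _)

theorem le_inner_map_self_of_inner_eigenvectorBasis_eq_zero {x : E} {j : Fin n}
    (hx : ∀ i, j < i → ⟪hT.eigenvectorBasis hn i, x⟫ = 0) :
    hT.eigenvalues hn j * ‖x‖ ^ 2 ≤ ⟪x, T x⟫ := by
  rw [hT.inner_map_self_eq_sum_eigenvalues_mul_sq hn,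
    ← (hT.eigenvectorBasis hn).sum_sq_inner_right, mul_sum]
  refine sum_le_sum fun i _ => ?_
  rcases le_or_gt i j with hij | hji
  · exact mul_le_mul_of_nonneg_right (hT.eigenvalues_antitone hn hij) (sq_nonneg _)
  · simp [hx i hji]

variable {F : Type*} [NormedAddCommGroup F] [InnerProductSpace ℝ F] [FiniteDimensional ℝ F]
  {S : F →ₗ[ℝ] F} (hS : S.IsSymmetric) {m : ℕ} (hm : finrank ℝ F = m)

theorem eigenvalues_le_eigenvalues_of_compression (ι : F →ₗᵢ[ℝ] E)
    (hTS : ∀ y, ⟪ι y, T (ι y)⟫ = ⟪y, S y⟫) {i : Fin n} {j : Fin m}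
    (hij : (i : ℕ) + m = j + n) :
    hT.eigenvalues hn i ≤ hS.eigenvalues hm j := by
  let Φ : F →ₗ[ℝ] (Iio j → ℝ) × (Ioi i → ℝ) :=
    (LinearMap.pi fun k : Iio j => innerₗ F (hS.eigenvectorBasis hm k)).prod
      (LinearMap.pi fun k : Ioi i => innerₗ E (hT.eigenvectorBasis hn k) ∘ₗ ι.toLinearMap)
  have hdim : finrank ℝ ((Iio j → ℝ) × (Ioi i → ℝ)) < finrank ℝ F := by
    simp only [finrank_prod, finrank_fintype_fun_eq_card, Fintype.card_coe, Fin.card_Iio,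
      Fin.card_Ioi, hm]
    omega
  obtain ⟨y, hyΦ, hy⟩ :=
    Submodule.exists_mem_ne_zero_of_ne_bot (Φ.ker_ne_bot_of_finrank_lt hdim)
  have hlow := hT.le_inner_map_self_of_inner_eigenvectorBasis_eq_zero hn (x := ι y) (j := i)
    fun k hk => congr_fun (congr_arg Prod.snd hyΦ) ⟨k, mem_Ioi.2 hk⟩
  have hup := hS.inner_map_self_le_of_inner_eigenvectorBasis_eq_zero hm (x := y) (j := j)
    fun k hk => congr_fun (congr_arg Prod.fst hyΦ) ⟨k, mem_Iio.2 hk⟩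
  rw [hTS, ι.norm_map] at hlow
  exact le_of_mul_le_mul_right (hlow.trans hup) (by positivity)

end LinearMap.IsSymmetric

section Submatrix

open Function

variable {ιA ιB : Type*} [Fintype ιA] [Fintype ιB] {φ : ιB → ιA}

theorem extend_zero_dotProduct {R : Type*} [NonUnitalNonAssocSemiring R] (hφ : Injective φ)
    (y : ιB → R) (w : ιA → R) : extend φ y 0 ⬝ᵥ w = y ⬝ᵥ (w ∘ φ) := by
  refine (Fintype.sum_of_injective φ hφ _ _ (fun a ha => ?_) fun b => ?_).symm
  · simp [extend_apply' _ _ _ ha]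
  · simp [hφ.extend_apply]

theorem extend_zero_dotProduct_mulVec_extend_zero {R : Type*} [CommSemiring R]
    (hφ : Injective φ) (A : Matrix ιA ιA R) (y : ιB → R) :
    extend φ y 0 ⬝ᵥ (A *ᵥ extend φ y 0) = y ⬝ᵥ (A.submatrix φ φ *ᵥ y) := by
  rw [extend_zero_dotProduct hφ]
  congr 1
  ext b
  change A (φ b) ⬝ᵥ extend φ y 0 = (fun j => A (φ b) (φ j)) ⬝ᵥ y
  rw [dotProduct_comm, extend_zero_dotProduct hφ, dotProduct_comm]
  rfl

noncomputable def EuclideanSpace.extendByZero (hφ : Injective φ) :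
    EuclideanSpace ℝ ιB →ₗᵢ[ℝ] EuclideanSpace ℝ ιA :=
  LinearMap.isometryOfInner
    ((WithLp.linearEquiv 2 ℝ (ιA → ℝ)).symm.toLinearMap ∘ₗ ExtendByZero.linearMap ℝ φ ∘ₗ
      (WithLp.linearEquiv 2 ℝ (ιB → ℝ)).toLinearMap)
    fun x y => by
      change extend φ y.ofLp 0 ⬝ᵥ star (extend φ x.ofLp 0) = y.ofLp ⬝ᵥ star x.ofLp
      rw [star_trivial, star_trivial, extend_zero_dotProduct hφ, extend_comp hφ]

variable [DecidableEq ιA] [DecidableEq ιB] {A : Matrix ιA ιA ℝ} {B : Matrix ιB ιB ℝ}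

theorem Matrix.IsHermitian.eigenvalues₀_le_eigenvalues₀_of_submatrix (hA : A.IsHermitian)
    (hB : B.IsHermitian) (hφ : Injective φ) (hAB : A.submatrix φ φ = B)
    {i : Fin (Fintype.card ιA)} {j : Fin (Fintype.card ιB)}
    (hij : (i : ℕ) + Fintype.card ιB = j + Fintype.card ιA) :
    hA.eigenvalues₀ i ≤ hB.eigenvalues₀ j := by
  refine LinearMap.IsSymmetric.eigenvalues_le_eigenvalues_of_compression _ _ _ _
    (EuclideanSpace.extendByZero hφ) (fun y => ?_) hij
  change (A *ᵥ extend φ y.ofLp 0) ⬝ᵥ star (extend φ y.ofLp 0) = (B *ᵥ y.ofLp) ⬝ᵥ star y.ofLp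
  rw [star_trivial, star_trivial, dotProduct_comm, extend_zero_dotProduct_mulVec_extend_zero hφ,
    hAB, dotProduct_comm]

end Submatrix

theorem Antitone.ciInf_eq_last {α : Type*} [ConditionallyCompleteLattice α] {m : ℕ}
    {f : Fin (m + 1) → α} (hf : Antitone f) : ⨅ i, f i = f (Fin.last m) :=
  le_antisymm (ciInf_le (Set.finite_range f).bddBelow _) (le_ciInf fun i => hf (Fin.le_last i))

noncomputable def negSq (t : ℝ) : ℝ := if t < 0 then t ^ 2 else 0

theorem negSq_nonneg (t : ℝ) : 0 ≤ negSq t := by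
  unfold negSq
  split_ifs <;> positivity

theorem negSq_antitone : Antitone negSq := by
  intro s t hst
  unfold negSq
  split_ifs <;> nlinarith

theorem negSq_sub_sq_antitone : Antitone fun t => negSq t - t ^ 2 := by
  intro s t hst
  dsimp only [negSq]
  split_ifs <;> nlinarith

theorem sum_negSq_sub_sq_iInf_le_of_interlace {M N : ℕ} {μ : Fin N → ℝ} {ν : Fin M → ℝ}
    (hμ : Antitone μ) (hν : Antitone ν) (hM : 0 < M) (hNM : N = M + 1)
    (hμν : ∀ (i : Fin N) (j : Fin M), (i : ℕ) = j + 1 → μ i ≤ ν j) :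
    ∑ j, negSq (ν j) - (⨅ j, ν j) ^ 2 ≤ ∑ i, negSq (μ i) - (⨅ i, μ i) ^ 2 := by
  subst hNM
  obtain ⟨m, rfl⟩ : ∃ m, M = m + 1 := ⟨M - 1, by omega⟩
  rw [hμ.ciInf_eq_last, hν.ciInf_eq_last, Fin.sum_univ_succ (f := fun i => negSq (μ i)),
    Fin.sum_univ_castSucc (f := fun i => negSq (μ (Fin.succ i))),
    Fin.sum_univ_castSucc (f := fun j => negSq (ν j)), Fin.succ_last]
  have hbody : ∑ j : Fin m, negSq (ν j.castSucc) ≤ ∑ j : Fin m, negSq (μ j.castSucc.succ) :=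
    sum_le_sum fun j _ => negSq_antitone (hμν _ _ rfl)
  have hlast := negSq_sub_sq_antitone (hμν (Fin.last (m + 1)) (Fin.last m) rfl)
  linarith [negSq_nonneg (μ 0)]

theorem Matrix.IsHermitian.sum_negSq_sub_sq_iInf_le_of_submatrix {ιA ιB : Type*} [Fintype ιA]
    [DecidableEq ιA] [Fintype ιB] [DecidableEq ιB] [Nonempty ιB] {A : Matrix ιA ιA ℝ}
    {B : Matrix ιB ιB ℝ} (hA : A.IsHermitian) (hB : B.IsHermitian) {φ : ιB → ιA}
    (hφ : Function.Injective φ) (hAB : A.submatrix φ φ = B)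
    (hcard : Fintype.card ιA = Fintype.card ιB + 1) :
    ∑ j, negSq (hB.eigenvalues j) - (⨅ j, hB.eigenvalues j) ^ 2 ≤
      ∑ i, negSq (hA.eigenvalues i) - (⨅ i, hA.eigenvalues i) ^ 2 := by
  obtain ⟨eA, hA₀⟩ : ∃ e : ιA ≃ Fin _, hA.eigenvalues = hA.eigenvalues₀ ∘ e := ⟨_, rfl⟩
  obtain ⟨eB, hB₀⟩ : ∃ e : ιB ≃ Fin _, hB.eigenvalues = hB.eigenvalues₀ ∘ e := ⟨_, rfl⟩
  simp only [hA₀, hB₀, Function.comp_apply, eA.sum_comp (fun i => negSq (hA.eigenvalues₀ i)),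
    eB.sum_comp (fun j => negSq (hB.eigenvalues₀ j)), eA.iInf_comp, eB.iInf_comp]
  exact sum_negSq_sub_sq_iInf_le_of_interlace hA.eigenvalues₀_antitone hB.eigenvalues₀_antitone
    Fintype.card_pos hcard fun i j hij =>
      hA.eigenvalues₀_le_eigenvalues₀_of_submatrix hB hφ hAB (by omega)

/-- For a graph `G` on `n ≥ 2` vertices and a vertex `v`,
`s⁻(G) ≥ λₙ(G)² + s⁻(G−v) − λ_{n−1}(G−v)²`. -/
theorem sMinus_ge_vertex_deleted {V : Type*} [Fintype V] [DecidableEq V]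
    (G : SimpleGraph V) (hn : 2 ≤ Fintype.card V) (v : V) :
    sMinus G ≥ (minEig G) ^ 2 + sMinus (G.induce (↑({v}ᶜ : Finset V) : Set V))
      - (minEig (G.induce (↑({v}ᶜ : Finset V) : Set V))) ^ 2 := by
  have hcard : Fintype.card V = Fintype.card (↑({v}ᶜ : Finset V) : Set V) + 1 := by
    simp only [Finset.coe_sort_coe, Fintype.card_coe, Finset.card_compl, Finset.card_singleton]
    omega
  have : Nonempty (↑({v}ᶜ : Finset V) : Set V) := Fintype.card_pos_iff.mp (by omega)
  let _ := Classical.decRel G.Adj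
  let _ := Classical.decRel (G.induce (↑({v}ᶜ : Finset V) : Set V)).Adj
  have key := (adjMatrix_isHermitian G).sum_negSq_sub_sq_iInf_le_of_submatrix
    (adjMatrix_isHermitian (G.induce (↑({v}ᶜ : Finset V) : Set V))) Subtype.val_injective rfl hcard
  unfold sMinus minEig adjEigenvalues
  unfold negSq at key
  linarith
end
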